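/- arXiv:1404.1898 — 2 statements merged into one kernel-verified Lean document; each statement's English description precedes it below -/
import Mathlib

section
/- Let a and b be positive integers, d = a + b, and let P = C·X^a(X−1)^b ∈ ℂ[X] with C ∈ ℂ such that P(a/d) = 1. Then the polynomial P − 1 has a root of multiplicity exactly 2 at z = a/d, all of its other complex roots are simple, and it has exactly d − 1 distinct complex roots. -/
/-!
The derivative of `C·X^a (X-1)^b` is `C·d·X^(a-1) (X-1)^(b-1) (X - a/d)`. Roots of `P - 1` avoid
`0` and `1`, so at such a root `z` the multiplicity of `P - 1` is one more than that of
`X - a/d`: it is `2` at `a/d` and `1` elsewhere. Since `P - 1` has degree `d` and `ℂ` is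
algebraically closed, its roots counted with multiplicity number `d`, hence `d - 1` distinct ones.
-/

open Polynomial

theorem Multiset.card_toFinset_add_one_of_count_eq_two {α : Type*} [DecidableEq α]
    {m : Multiset α} {x : α} (hx : m.count x = 2) (h : ∀ y ∈ m, y ≠ x → m.count y = 1) :
    m.toFinset.card + 1 = card m := by
  have hmem : x ∈ m.toFinset := Multiset.mem_toFinset.2 (Multiset.count_pos.1 (by omega))
  rw [← m.toFinset_sum_count_eq, ← Finset.add_sum_erase _ _ hmem, hx,
    Finset.sum_congr rfl fun y hy => h y (Multiset.mem_toFinset.1 (Finset.mem_of_mem_erase hy))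
      (Finset.ne_of_mem_erase hy),
    Finset.sum_const, smul_eq_mul, mul_one, Finset.card_erase_of_mem hmem]
  have := Finset.card_pos.2 ⟨x, hmem⟩
  omega

theorem Polynomial.derivative_X_pow_mul_X_sub_one_pow {R : Type*} [CommRing R] {a b : ℕ}
    (ha : a ≠ 0) (hb : b ≠ 0) :
    derivative (X ^ a * (X - 1) ^ b : R[X]) =
      X ^ (a - 1) * (X - 1) ^ (b - 1) * (C ((a : R) + b) * X - C (a : R)) := by
  obtain ⟨a, rfl⟩ := Nat.exists_eq_add_one_of_ne_zero ha
  obtain ⟨b, rfl⟩ := Nat.exists_eq_add_one_of_ne_zero hb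
  simp only [derivative_mul, derivative_pow, derivative_sub, derivative_X, derivative_one,
    Nat.add_sub_cancel, Nat.cast_add_one, map_add, map_one, map_natCast]
  ring

section Field

variable {K : Type*} [Field K] [CharZero K] {a b : ℕ} {c : K}

theorem Polynomial.derivative_C_mul_X_pow_mul_X_sub_one_pow_sub_one (ha : a ≠ 0) (hb : b ≠ 0) :
    derivative (C c * (X ^ a * (X - 1) ^ b) - 1 : K[X]) =
      C (c * (a + b)) * (X ^ (a - 1) * (X - 1) ^ (b - 1)) * (X - C ((a : K) / (a + b))) := by
  have hab : (a : K) + b ≠ 0 := by norm_cast; omega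
  have hlin : C ((a : K) + b) * X - C (a : K) = C ((a : K) + b) * (X - C ((a : K) / (a + b))) := by
    rw [mul_sub, ← C_mul, mul_div_cancel₀ _ hab]
  rw [derivative_sub, derivative_one, sub_zero, derivative_C_mul,
    derivative_X_pow_mul_X_sub_one_pow ha hb, hlin, C_mul]
  ring

theorem Polynomial.natDegree_C_mul_X_pow_mul_X_sub_one_pow_sub_one (hc : c ≠ 0) :
    (C c * (X ^ a * (X - 1) ^ b) - 1 : K[X]).natDegree = a + b := by
  by_cases h : a = 0 ∧ b = 0
  · obtain ⟨rfl, rfl⟩ := h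
    rw [pow_zero, pow_zero, mul_one, mul_one, ← C_1, ← C_sub, natDegree_C]
  · compute_degree!
    simpa [h] using hc

theorem Polynomial.rootMultiplicity_C_mul_X_pow_mul_X_sub_one_pow_sub_one [DecidableEq K]
    (ha : a ≠ 0) (hb : b ≠ 0) {z : K} (hz : (C c * (X ^ a * (X - 1) ^ b) - 1).IsRoot z) :
    (C c * (X ^ a * (X - 1) ^ b) - 1).rootMultiplicity z = if z = a / (a + b) then 2 else 1 := by
  set Q : K[X] := C c * (X ^ a * (X - 1) ^ b) - 1
  have hz' : c * (z ^ a * (z - 1) ^ b) = 1 := by simpa [Q, sub_eq_zero] using hz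
  have hc : c ≠ 0 := left_ne_zero_of_mul_eq_one hz'
  have hz0 : z ≠ 0 := by rintro rfl; simp [zero_pow ha] at hz'
  have hz1 : z - 1 ≠ 0 := by intro h; simp [h, zero_pow hb] at hz'
  have hQ : Q ≠ 0 := fun h => by simpa [Q, zero_pow ha] using congrArg (eval 0) h
  have hQ' : Q.rootMultiplicity z = (derivative Q).rootMultiplicity z + 1 := by
    have := (rootMultiplicity_pos hQ).2 hz
    rw [derivative_rootMultiplicity_of_root hz]
    omega
  have hab : (a : K) + b ≠ 0 := by norm_cast; omega
  have hunit : ¬ (C (c * (a + b)) * (X ^ (a - 1) * (X - 1) ^ (b - 1)) : K[X]).IsRoot z := by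
    simp [hc, hab, hz0, hz1]
  rw [hQ', derivative_C_mul_X_pow_mul_X_sub_one_pow_sub_one ha hb,
    rootMultiplicity_mul (mul_ne_zero (fun h => hunit (by rw [h]; simp)) (X_sub_C_ne_zero _)),
    rootMultiplicity_eq_zero hunit, rootMultiplicity_X_sub_C]
  split_ifs <;> rfl

end Field

/-- Let `a`, `b` be positive integers, `d = a + b`, and `P = C·X^a (X-1)^b ∈ ℂ[X]` with
`P(a/d) = 1`.  Then `P - 1` has a root of multiplicity exactly `2` at `a/d`, all of its
other complex roots are simple, and it has exactly `d - 1` distinct complex roots. -/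
theorem simple_branching_over_one
    (a b : ℕ) (ha : 0 < a) (hb : 0 < b) (d : ℕ) (hd : d = a + b)
    (C : ℂ) (P : Polynomial ℂ)
    (hP : P = Polynomial.C C * (Polynomial.X ^ a * (Polynomial.X - 1) ^ b))
    (hval : P.eval ((a : ℂ) / (d : ℂ)) = 1) :
    Polynomial.rootMultiplicity ((a : ℂ) / (d : ℂ)) (P - 1) = 2 ∧
    (∀ z : ℂ, (P - 1).eval z = 0 → z ≠ (a : ℂ) / (d : ℂ) →
      Polynomial.rootMultiplicity z (P - 1) = 1) ∧
    (P - 1).roots.toFinset.card = d - 1 := by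
  subst hP hd
  push_cast at hval ⊢
  set Q : ℂ[X] := Polynomial.C C * (X ^ a * (X - 1) ^ b) - 1
  have hmult : ∀ z, Q.IsRoot z →
      Q.rootMultiplicity z = if z = (a : ℂ) / (a + b) then 2 else 1 :=
    fun _ => rootMultiplicity_C_mul_X_pow_mul_X_sub_one_pow_sub_one ha.ne' hb.ne'
  have hroot : Q.IsRoot ((a : ℂ) / (a + b)) := by simp [Q, hval]
  have hc : C ≠ 0 := by rintro rfl; simp at hval
  have hcard : Q.roots.toFinset.card + 1 = Multiset.card Q.roots :=
    Multiset.card_toFinset_add_one_of_count_eq_two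
      (by rw [count_roots, hmult _ hroot, if_pos rfl])
      (fun z hz hne => by rw [count_roots, hmult _ (isRoot_of_mem_roots hz), if_neg hne])
  rw [IsAlgClosed.card_roots_eq_natDegree,
    natDegree_C_mul_X_pow_mul_X_sub_one_pow_sub_one hc] at hcard
  exact ⟨by rw [hmult _ hroot, if_pos rfl], fun z hz hne => by rw [hmult _ hz, if_neg hne],
    by omega⟩
end

section
/- Let η : ℝ → ℝ satisfy 0 ≤ η ≤ 1, η(r) = 0 for all r ≤ 1/2, and η(r) = 1 for all r ≥ 1. Define f_X(x,y) = (1 − η(y)) + (η(x) + η(y))·y and f_Y(x,y) = (1 − η(x)) + (η(x) + η(y))·x. Then for all x, y ∈ [0,4) with x·y < 1/4, one has 1/2 < f_X(x,y) < 5 and 1/2 < f_Y(x,y) < 5. -/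
/-! If `y ≤ 1/2` then `η y = 0` and `f_X = 1 + η(x) y` lies in `[1, 3/2]`. If `y > 1/2`, the
constraint `x y < 1/4` forces `x < 1/2`, so `η x = 0` and `f_X = (1 - η y) · 1 + η y · y` is a
convex combination of `1` and `y`, both in `(1/2, 5)`. The bound for `f_Y` is the same with `x`
and `y` exchanged. -/

lemma cutoff_coefficient_mem_Ioo {η : ℝ → ℝ} (h0 : ∀ r, 0 ≤ η r) (h1 : ∀ r, η r ≤ 1)
    (hlo : ∀ r, r ≤ 1 / 2 → η r = 0) {x y : ℝ} (hy0 : 0 ≤ y) (hy4 : y < 4)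
    (hxy : x * y < 1 / 4) :
    (1 - η y) + (η x + η y) * y ∈ Set.Ioo (1 / 2 : ℝ) 5 := by
  rcases le_or_gt y (1 / 2) with hy | hy
  · have hle : η x * y ≤ y := mul_le_of_le_one_left hy0 (h1 x)
    have hnonneg : 0 ≤ η x * y := mul_nonneg (h0 x) hy0
    rw [hlo y hy]
    constructor <;> linarith
  · have hx : x ≤ 1 / 2 := by nlinarith
    rw [hlo x hx, zero_add]
    simpa only [smul_eq_mul, mul_one] using
      convex_Ioo (1 / 2 : ℝ) 5 (by norm_num : (1 : ℝ) ∈ Set.Ioo (1 / 2) 5) ⟨hy, by linarith⟩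
        (sub_nonneg.2 (h1 y)) (h0 y) (sub_add_cancel 1 (η y))

theorem coefficient_function_bounds_general (η : ℝ → ℝ)
    (h0 : ∀ r : ℝ, 0 ≤ η r) (h1 : ∀ r : ℝ, η r ≤ 1)
    (hlo : ∀ r : ℝ, r ≤ 1 / 2 → η r = 0)
    (fX fY : ℝ → ℝ → ℝ)
    (hfX : ∀ x y : ℝ, fX x y = (1 - η y) + (η x + η y) * y)
    (hfY : ∀ x y : ℝ, fY x y = (1 - η x) + (η x + η y) * x) :
    ∀ x y : ℝ, 0 ≤ x → x < 4 → 0 ≤ y → y < 4 → x * y < 1 / 4 →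
      (1 / 2 < fX x y ∧ fX x y < 5) ∧ (1 / 2 < fY x y ∧ fY x y < 5) := by
  intro x y hx0 hx4 hy0 hy4 hxy
  refine ⟨hfX x y ▸ cutoff_coefficient_mem_Ioo h0 h1 hlo hy0 hy4 hxy, ?_⟩
  rw [hfY, add_comm (η x)]
  exact cutoff_coefficient_mem_Ioo h0 h1 hlo hx0 hx4 (by rwa [mul_comm])

/-- If `η : ℝ → ℝ` is a cutoff with `0 ≤ η ≤ 1`, `η r = 0` for `r ≤ 1/2`, `η r = 1` for
`r ≥ 1`, and `f_X (x,y) = (1 - η y) + (η x + η y)·y`,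
`f_Y (x,y) = (1 - η x) + (η x + η y)·x`, then for all `x, y ∈ [0,4)` with `x y < 1/4`
one has `1/2 < f_X (x,y) < 5` and `1/2 < f_Y (x,y) < 5`. -/
theorem coefficient_function_bounds (η : ℝ → ℝ)
    (h0 : ∀ r : ℝ, 0 ≤ η r) (h1 : ∀ r : ℝ, η r ≤ 1)
    (hlo : ∀ r : ℝ, r ≤ 1 / 2 → η r = 0) (hhi : ∀ r : ℝ, 1 ≤ r → η r = 1)
    (fX fY : ℝ → ℝ → ℝ)
    (hfX : ∀ x y : ℝ, fX x y = (1 - η y) + (η x + η y) * y)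
    (hfY : ∀ x y : ℝ, fY x y = (1 - η x) + (η x + η y) * x) :
    ∀ x y : ℝ, 0 ≤ x → x < 4 → 0 ≤ y → y < 4 → x * y < 1 / 4 →
      (1 / 2 < fX x y ∧ fX x y < 5) ∧ (1 / 2 < fY x y ∧ fY x y < 5) :=
  coefficient_function_bounds_general η h0 h1 hlo fX fY hfX hfY
end
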